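/- Let α > -1/2, A_α(x) = |x|^{2α+1}, and for x ≠ 0 define Θ_0(x,y) = sgn(x)/(2A_α(x)) + sgn(y)/(2A_α(y)) for y ∈ [-|x|,|x|]. Then for every even-index polynomial b_{2m}(y) = (y/2)^{2m}/((α+1)_m m!), we have ∫_{-|x|}^{|x|} Θ_0(x,y) b_{2m}(y) A_α(y) dy = b_{2m+1}(x), where b_{2m+1}(x) = (x/2)^{2m+1}/((α+1)_{m+1} m!). -/

import Mathlib

/-- The Dunkl–Taylor monomials: `b_{2m}(x) = (x/2)^{2m}/((α+1)_m m!)` and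
`b_{2m+1}(x) = (x/2)^{2m+1}/((α+1)_{m+1} m!)`, with `(a)_m` the Pochhammer symbol. -/
noncomputable def dunklB (α : ℝ) (p : ℕ) (x : ℝ) : ℝ :=
  if Even p then (x / 2) ^ p / ((ascPochhammer ℝ (p / 2)).eval (α + 1) * (p / 2).factorial)
  else (x / 2) ^ p / ((ascPochhammer ℝ (p / 2 + 1)).eval (α + 1) * (p / 2).factorial)

/-- The kernel `Θ_0(x,y) = sgn(x)/(2|x|^{2α+1}) + sgn(y)/(2|y|^{2α+1})`. -/
noncomputable def theta0 (α : ℝ) (x y : ℝ) : ℝ :=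
  Real.sign x / (2 * |x| ^ (2 * α + 1)) + Real.sign y / (2 * |y| ^ (2 * α + 1))

/-
Multiplying the kernel by `A_α(y)` splits the integrand into the even part
`sgn(x) / (2 A_α(x)) · b_{2m}(y) A_α(y)` and the odd part `sgn(y) b_{2m}(y) / 2`, which integrates
to zero over `[-|x|, |x|]`. The even part is a multiple of `|y|^{2m+2α+1}`, so its integral over
`[-a, a]` is `2 b_{2m}(1) a^{2m+2α+2} / (2m+2α+2) = 2 A_α(a) b_{2m+1}(a)`, by the recursion
`b_{2m+1}(x) = x b_{2m}(x) / (2m+2α+2)`; the factor `sgn(x)` turns `b_{2m+1}(|x|)` into `b_{2m+1}(x)`.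
-/

open MeasureTheory intervalIntegral Real

theorem Real.monotone_sign : Monotone Real.sign := by
  intro a b hab
  rcases lt_trichotomy a 0 with ha | rfl | ha <;> rcases lt_trichotomy b 0 with hb | rfl | hb <;>
    simp only [sign_of_neg, sign_of_pos, sign_zero, *] <;> linarith

theorem Real.sign_mul_abs (x : ℝ) : Real.sign x * |x| = x := by
  rcases lt_trichotomy x 0 with hx | rfl | hx
  · rw [sign_of_neg hx, abs_of_neg hx]; ring
  · simp
  · rw [sign_of_pos hx, abs_of_pos hx, one_mul]

namespace intervalIntegral

variable {E : Type*} [NormedAddCommGroup E] [NormedSpace ℝ E] {f : ℝ → E}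

theorem integral_neg_self_of_odd (hf : Function.Odd f) (a : ℝ) : ∫ x in -a..a, f x = 0 := by
  have hodd : ∀ x, f (-x) = -f x := hf
  have h := integral_comp_neg (a := -a) (b := a) f
  simp only [hodd, integral_neg, neg_neg] at h
  refine (smul_eq_zero.mp ?_).resolve_left (two_ne_zero (α := ℝ))
  rw [two_smul]
  nth_rw 1 [← h]
  exact neg_add_cancel _

theorem integral_neg_self_of_even (hf : Function.Even f) {a : ℝ}
    (hi : IntervalIntegrable f volume 0 a) :
    ∫ x in -a..a, f x = (2 : ℝ) • ∫ x in 0..a, f x := by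
  have heven : ∀ x, f (-x) = f x := hf
  have hreflect : ∫ x in -a..0, f x = ∫ x in 0..a, f x := by
    simpa [heven] using (integral_comp_neg (a := 0) (b := a) f).symm
  have hi' : IntervalIntegrable f volume (-a) 0 := by
    simpa [heven] using (IntervalIntegrable.iff_comp_neg (f := f)).mp hi |>.symm
  rw [← integral_add_adjacent_intervals hi' hi, hreflect, two_smul]

theorem integral_abs_rpow_neg_self {s : ℝ} (hs : -1 < s) {a : ℝ} (ha : 0 ≤ a) :
    ∫ y in -a..a, |y| ^ s = 2 * (a ^ (s + 1) / (s + 1)) := by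
  have habs : Set.EqOn (fun y : ℝ => |y| ^ s) (fun y => y ^ s) (Set.uIcc 0 a) := by
    intro y hy
    rw [Set.uIcc_of_le ha] at hy
    simp [abs_of_nonneg hy.1]
  have hi : IntervalIntegrable (fun y : ℝ => |y| ^ s) volume 0 a :=
    (intervalIntegrable_rpow' hs).congr (habs.symm.mono Set.uIoc_subset_uIcc)
  rw [integral_neg_self_of_even (fun y => by simp) hi, integral_congr habs,
    integral_rpow (Or.inl hs), zero_rpow (by linarith), sub_zero, smul_eq_mul]

end intervalIntegral

theorem pow_mul_abs_rpow_of_even {n : ℕ} (hn : Even n) {s : ℝ} (hs : 0 ≤ s) (y : ℝ) :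
    y ^ n * |y| ^ s = |y| ^ ((n : ℝ) + s) := by
  rw [← hn.pow_abs, rpow_add_of_nonneg (abs_nonneg y) (Nat.cast_nonneg n) hs, rpow_natCast]

theorem dunklB_eq_pow_mul (α : ℝ) (p : ℕ) (x : ℝ) : dunklB α p x = x ^ p * dunklB α p 1 := by
  unfold dunklB
  split_ifs <;> ring

theorem dunklB_two_mul_add_one (α : ℝ) (m : ℕ) (x : ℝ) :
    dunklB α (2 * m + 1) x = x * dunklB α (2 * m) x / (2 * m + 2 * α + 2) := by
  have hodd : ¬ Even (2 * m + 1) := Nat.not_even_iff_odd.mpr (odd_two_mul_add_one m)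
  rw [dunklB, dunklB, if_neg hodd, if_pos (even_two_mul m), show (2 * m + 1) / 2 = m by omega,
    show 2 * m / 2 = m by omega, ascPochhammer_succ_eval,
    show (2 * m + 2 * α + 2 : ℝ) = 2 * (α + 1 + m) by ring]
  generalize α + 1 + (m : ℝ) = c
  ring

theorem theta0_mul_rpow_abs (α x y : ℝ) :
    theta0 α x y * |y| ^ (2 * α + 1)
      = Real.sign x / (2 * |x| ^ (2 * α + 1)) * |y| ^ (2 * α + 1) + Real.sign y / 2 := by
  rcases eq_or_ne y 0 with rfl | hy
  · simp [theta0]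
  · have hpos : 0 < |y| ^ (2 * α + 1) := rpow_pos_of_pos (abs_pos.mpr hy) _
    rw [theta0]
    field_simp

theorem continuous_dunklB (α : ℝ) (p : ℕ) : Continuous (dunklB α p) :=
  ((continuous_pow p).mul continuous_const).congr fun x => (dunklB_eq_pow_mul α p x).symm

theorem sign_mul_dunklB_abs (α : ℝ) (m : ℕ) (x : ℝ) :
    Real.sign x * dunklB α (2 * m + 1) |x| = dunklB α (2 * m + 1) x := by
  rw [dunklB_eq_pow_mul, dunklB_eq_pow_mul α _ x, pow_succ, (even_two_mul m).pow_abs]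
  linear_combination (x ^ (2 * m) * dunklB α (2 * m + 1) 1) * Real.sign_mul_abs x

theorem integral_dunklB_mul_rpow_abs {α : ℝ} (hα : -1/2 ≤ α) (m : ℕ) {a : ℝ} (ha : 0 ≤ a) :
    ∫ y in -a..a, dunklB α (2 * m) y * |y| ^ (2 * α + 1)
      = 2 * a ^ (2 * α + 1) * dunklB α (2 * m + 1) a := by
  have hs : 0 ≤ 2 * α + 1 := by linarith
  have hexp : ((2 * m : ℕ) : ℝ) + (2 * α + 1) + 1 = 2 * m + 2 * α + 2 := by push_cast; ring
  have hm : (0 : ℝ) ≤ m := m.cast_nonneg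
  have hsplit : a ^ (2 * m + 2 * α + 2 : ℝ) = a ^ (2 * α + 1) * a ^ (2 * m + 1) := by
    rw [← rpow_natCast, ← rpow_add' ha (by push_cast; linarith)]
    congr 1
    push_cast
    ring
  calc ∫ y in -a..a, dunklB α (2 * m) y * |y| ^ (2 * α + 1)
      = dunklB α (2 * m) 1 * ∫ y in -a..a, |y| ^ (((2 * m : ℕ) : ℝ) + (2 * α + 1)) := by
        rw [← intervalIntegral.integral_const_mul]
        congr 1 with y
        rw [dunklB_eq_pow_mul, mul_comm (y ^ _), mul_assoc,
          pow_mul_abs_rpow_of_even (even_two_mul m) hs]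
    _ = dunklB α (2 * m) 1 * (2 * (a ^ (2 * m + 2 * α + 2) / (2 * m + 2 * α + 2))) := by
        rw [integral_abs_rpow_neg_self (by push_cast; linarith) ha, hexp]
    _ = 2 * a ^ (2 * α + 1) * dunklB α (2 * m + 1) a := by
        rw [dunklB_two_mul_add_one, dunklB_eq_pow_mul α _ a, hsplit]
        ring

/-- `∫_{-|x|}^{|x|} Θ_0(x,y) b_{2m}(y) A_α(y) dy = b_{2m+1}(x)` for `x ≠ 0`,
where `A_α(y) = |y|^{2α+1}`. -/
theorem stmt2 (α : ℝ) (hα : -1/2 < α) (m : ℕ) (x : ℝ) (hx : x ≠ 0) :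
    ∫ y in (-|x|)..|x|, theta0 α x y * dunklB α (2 * m) y * |y| ^ (2 * α + 1)
      = dunklB α (2 * m + 1) x := by
  have hA : 0 < |x| ^ (2 * α + 1) := rpow_pos_of_pos (abs_pos.mpr hx) _
  have hodd : Function.Odd fun y => Real.sign y * dunklB α (2 * m) y / 2 := fun y => by
    dsimp only
    rw [dunklB_eq_pow_mul, dunklB_eq_pow_mul α _ y, (even_two_mul m).neg_pow, sign_neg]
    ring
  calc ∫ y in (-|x|)..|x|, theta0 α x y * dunklB α (2 * m) y * |y| ^ (2 * α + 1)
      = ∫ y in (-|x|)..|x|, (Real.sign x / (2 * |x| ^ (2 * α + 1))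
          * (dunklB α (2 * m) y * |y| ^ (2 * α + 1)) + Real.sign y * dunklB α (2 * m) y / 2) := by
        congr 1 with y
        rw [mul_right_comm, theta0_mul_rpow_abs]
        ring
    _ = Real.sign x / (2 * |x| ^ (2 * α + 1))
          * ∫ y in (-|x|)..|x|, dunklB α (2 * m) y * |y| ^ (2 * α + 1) := by
        have hcont : Continuous fun y => dunklB α (2 * m) y * |y| ^ (2 * α + 1) :=
          (continuous_dunklB α _).mul (continuous_abs.rpow_const fun _ => Or.inr (by linarith))
        rw [integral_add ((hcont.intervalIntegrable _ _).const_mul _)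
          ((Real.monotone_sign.intervalIntegrable.mul_continuousOn
            (continuous_dunklB α _).continuousOn).div_const _),
          intervalIntegral.integral_const_mul, integral_neg_self_of_odd hodd, add_zero]
    _ = Real.sign x * dunklB α (2 * m + 1) |x| := by
        rw [integral_dunklB_mul_rpow_abs hα.le m (abs_nonneg x)]
        field_simp
    _ = dunklB α (2 * m + 1) x := sign_mul_dunklB_abs α m x
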